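/- arXiv:1506.03385 — 4 statements merged into one kernel-verified Lean document; each statement's English description precedes it below -/
import Mathlib

section
/- Let f : [0,∞) → ℝ be continuous with f(0) ≥ 0. Define L(t) = sup_{0 ≤ s ≤ t} max(-f(s), 0). Then L is nondecreasing, continuous, L(0) = 0, and ξ(t) := f(t) + L(t) ≥ 0 for all t. -/
open Set

section RunningSup

variable {α : Type*} [ConditionallyCompleteLinearOrder α] [TopologicalSpace α] [OrderTopology α]
  {g : ℝ → α} {a : ℝ}

theorem monotoneOn_sSup_image_Icc (hg : ContinuousOn g (Ici a)) :
    MonotoneOn (fun t => sSup (g '' Icc a t)) (Ici a) := fun _ hs _ _ hst =>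
  csSup_le_csSup ((isCompact_Icc.image_of_continuousOn (hg.mono Icc_subset_Ici_self)).bddAbove)
    ((nonempty_Icc.2 hs).image g) (image_mono (Icc_subset_Icc_right hst))

/-- Rescaling `[a, t]` to `[0, 1]` turns the running supremum into a supremum over a fixed compact
set of a jointly continuous function of `(t, u)`; clamping by `max a` only makes that function
total, it does not change it for `t ≥ a`. -/
theorem continuousOn_sSup_image_Icc (hg : ContinuousOn g (Ici a)) :
    ContinuousOn (fun t => sSup (g '' Icc a t)) (Ici a) := by
  have hG : Continuous fun p : ℝ × ℝ => g (max a (AffineMap.lineMap a p.1 p.2)) :=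
    hg.comp_continuous (by fun_prop) fun _ => mem_Ici.2 (le_max_left _ _)
  refine (isCompact_Icc.continuous_sSup (f := fun t u => g (max a (AffineMap.lineMap a t u)))
    (K := Icc (0 : ℝ) 1) hG).continuousOn.congr fun t ht => ?_
  have hseg : segment ℝ a t = Icc a t := segment_eq_Icc ht
  rw [← hseg, segment_eq_image_lineMap, image_image]
  refine congrArg sSup (image_congr fun u hu => ?_)
  rw [max_eq_right (hseg.subset (lineMap_mem_segment ℝ a t hu)).1]

end RunningSup

/-- One-dimensional Skorohod reflection on `[0,∞)`: with
`L t = sup_{0 ≤ s ≤ t} (-f s)⁺`, the regulator `L` is nondecreasing, continuous,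
vanishes at `0`, and `ξ = f + L` is nonnegative. -/
theorem skorohod_regulator_properties
    (f : ℝ → ℝ) (hf : ContinuousOn f (Set.Ici 0)) (hf0 : 0 ≤ f 0)
    (L : ℝ → ℝ)
    (hL : ∀ t, L t = sSup ((fun s => max (-f s) 0) '' Set.Icc 0 t)) :
    MonotoneOn L (Set.Ici 0) ∧ ContinuousOn L (Set.Ici 0) ∧ L 0 = 0 ∧
      ∀ t, 0 ≤ t → 0 ≤ f t + L t := by
  have hg : ContinuousOn (fun s => max (-f s) 0) (Ici 0) := hf.neg.sup continuousOn_const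
  obtain rfl : L = fun t => sSup ((fun s => max (-f s) 0) '' Icc 0 t) := funext hL
  refine ⟨monotoneOn_sSup_image_Icc hg, continuousOn_sSup_image_Icc hg, ?_, fun t ht => ?_⟩
  · simp [hf0]
  · have : max (-f t) 0 ≤ sSup ((fun s => max (-f s) 0) '' Icc 0 t) :=
      (hg.mono Icc_subset_Ici_self).le_sSup_image_Icc ⟨ht, le_rfl⟩
    linarith [le_max_left (-f t) 0]
end

section
/- Let f : [0,∞) → ℝ be continuous with f(0) ≥ 0, and L(t) = sup_{0 ≤ s ≤ t} max(-f(s), 0), ξ(t) = f(t) + L(t). If t is a point where ξ(t) > 0, then L is constant on a neighborhood of t. -/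
/-!
Write `g = (-f)⁺`, so that `L` is the running supremum of `g`. Since `ξ t > 0` means `-f t < L t`,
continuity gives `-f u < L t` for all `u` near `t`, hence `g u ≤ L t` there (as `L t ≥ 0`), which
keeps `L` from growing to the right of `t`. To the left, if `L s < L t` the supremum over `[0, t]`
would be attained at some `u ∈ (s, t]` with `g u = L t > 0`, i.e. `-f u = L t`, which is impossible.
-/

open Set

namespace Skorohod

noncomputable def runningSup (g : ℝ → ℝ) (t : ℝ) : ℝ :=
  sSup (g '' Icc 0 t)

variable {g : ℝ → ℝ}

theorem runningSup_nonneg (hg : ∀ s, 0 ≤ g s) (t : ℝ) : 0 ≤ runningSup g t :=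
  Real.sSup_nonneg <| by
    rintro _ ⟨u, -, rfl⟩
    exact hg u

theorem bddAbove_image_Icc (hg : ContinuousOn g (Ici 0)) (t : ℝ) : BddAbove (g '' Icc 0 t) :=
  (isCompact_Icc.image_of_continuousOn (hg.mono Icc_subset_Ici_self)).bddAbove

theorem le_runningSup (hg : ContinuousOn g (Ici 0)) {u t : ℝ} (hu : u ∈ Icc 0 t) :
    g u ≤ runningSup g t :=
  le_csSup (bddAbove_image_Icc hg t) (mem_image_of_mem g hu)

theorem exists_eq_runningSup (hg : ContinuousOn g (Ici 0)) {t : ℝ} (ht : 0 ≤ t) :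
    ∃ u ∈ Icc 0 t, g u = runningSup g t :=
  (isCompact_Icc.image_of_continuousOn (hg.mono Icc_subset_Ici_self)).sSup_mem
    (nonempty_Icc.2 ht |>.image g)

theorem runningSup_le_of_forall_Ioc_le (hg : ContinuousOn g (Ici 0)) (hg0 : ∀ s, 0 ≤ g s)
    {s t : ℝ} (hle : ∀ u ∈ Ioc t s, g u ≤ runningSup g t) : runningSup g s ≤ runningSup g t := by
  refine Real.sSup_le ?_ (runningSup_nonneg hg0 t)
  rintro _ ⟨u, ⟨hu0, hus⟩, rfl⟩
  rcases le_or_gt u t with hut | htu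
  · exact le_runningSup hg ⟨hu0, hut⟩
  · exact hle u ⟨htu, hus⟩

theorem runningSup_mono (hg : ContinuousOn g (Ici 0)) (hg0 : ∀ s, 0 ≤ g s) :
    Monotone (runningSup g) := fun s t hst =>
  Real.sSup_le (by rintro _ ⟨u, ⟨hu0, hus⟩, rfl⟩; exact le_runningSup hg ⟨hu0, hus.trans hst⟩)
    (runningSup_nonneg hg0 t)

variable {h : ℝ → ℝ}

theorem continuousOn_max_zero (hh : ContinuousOn h (Ici 0)) :
    ContinuousOn (fun v => max (h v) 0) (Ici 0) := by
  fun_prop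

theorem runningSup_posPart_le_of_forall_lt (hh : ContinuousOn h (Ici 0)) {s t : ℝ}
    (ht : 0 ≤ t) (hlt : ∀ u ∈ Icc 0 t, s < u → h u < runningSup (fun v => max (h v) 0) t) :
    runningSup (fun v => max (h v) 0) t ≤ runningSup (fun v => max (h v) 0) s := by
  obtain ⟨u, hu, hmax⟩ := exists_eq_runningSup (continuousOn_max_zero hh) ht
  rcases le_or_gt u s with hus | hsu
  · exact hmax ▸ le_runningSup (continuousOn_max_zero hh) ⟨hu.1, hus⟩
  · rcases max_choice (h u) 0 with hhu | hzero
    · exact absurd (hhu ▸ hmax) (hlt u hu hsu).ne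
    · have hMt : runningSup (fun v => max (h v) 0) t = 0 := by rw [← hmax, hzero]
      rw [hMt]
      exact runningSup_nonneg (fun v => le_max_right _ _) s

theorem runningSup_posPart_eq_of_forall_lt (hh : ContinuousOn h (Ici 0)) {t ε : ℝ} (ht : 0 ≤ t)
    (hlt : ∀ u, 0 ≤ u → dist u t < ε → h u < runningSup (fun v => max (h v) 0) t) {s : ℝ}
    (hs : dist s t < ε) :
    runningSup (fun v => max (h v) 0) s = runningSup (fun v => max (h v) 0) t := by
  have hg := continuousOn_max_zero hh
  have hg0 : ∀ v, 0 ≤ max (h v) 0 := fun v => le_max_right _ _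
  have hnear : ∀ u ∈ uIcc s t, 0 ≤ u → h u < runningSup (fun v => max (h v) 0) t :=
    fun u hu hu0 => hlt u hu0 ((Real.dist_right_le_of_mem_uIcc hu).trans_lt hs)
  rcases le_total s t with hst | hts
  · refine le_antisymm (runningSup_mono hg hg0 hst)
      (runningSup_posPart_le_of_forall_lt hh ht fun u hu hsu => ?_)
    exact hnear u (Icc_subset_uIcc ⟨hsu.le, hu.2⟩) hu.1
  · refine le_antisymm (runningSup_le_of_forall_Ioc_le hg hg0 fun u hu => ?_)
      (runningSup_mono hg hg0 hts)
    exact max_le (hnear u (Icc_subset_uIcc' ⟨hu.1.le, hu.2⟩) (ht.trans hu.1.le)).le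
      (runningSup_nonneg hg0 t)

end Skorohod

open Skorohod in
theorem skorohod_regulator_locally_constant_general
    (f : ℝ → ℝ) (hf : ContinuousOn f (Set.Ici 0))
    (L : ℝ → ℝ)
    (hL : ∀ t, L t = sSup ((fun s => max (-f s) 0) '' Set.Icc 0 t))
    (t : ℝ) (ht : 0 ≤ t) (hpos : 0 < f t + L t) :
    ∃ ε > 0, ∀ s, |s - t| < ε → L s = L t := by
  obtain rfl : L = runningSup (fun s => max (-f s) 0) := funext hL
  obtain ⟨ε, hε, hnear⟩ :=
    Metric.continuousWithinAt_iff.1 (hf t ht).neg _ (show 0 < _ - -f t by linarith)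
  refine ⟨ε, hε, fun s hs => runningSup_posPart_eq_of_forall_lt (h := fun x => -f x) hf.neg ht
    (fun u hu hut => ?_) (by rwa [Real.dist_eq])⟩
  have hclose := hnear hu hut
  rw [Real.dist_eq, Pi.neg_apply, Pi.neg_apply] at hclose
  linarith [(abs_lt.1 hclose).2]

/-- For the explicit Skorohod solution on `[0,∞)`, the regulator
`L t = sup_{0 ≤ s ≤ t} (-f s)⁺` is locally constant wherever the reflected path
`ξ = f + L` is strictly positive. -/
theorem skorohod_regulator_locally_constant
    (f : ℝ → ℝ) (hf : ContinuousOn f (Set.Ici 0)) (hf0 : 0 ≤ f 0)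
    (L : ℝ → ℝ)
    (hL : ∀ t, L t = sSup ((fun s => max (-f s) 0) '' Set.Icc 0 t))
    (t : ℝ) (ht : 0 ≤ t) (hpos : 0 < f t + L t) :
    ∃ ε > 0, ∀ s, |s - t| < ε → L s = L t :=
  skorohod_regulator_locally_constant_general f hf L hL t ht hpos
end

section
/- The solution pair (ξ, L) of the Skorohod problem on [0,∞) is unique: if (ξ₁, L₁) and (ξ₂, L₂) both satisfy ξᵢ(t) = f(t) + Lᵢ(t) ≥ 0 with Lᵢ continuous nondecreasing, Lᵢ(0) = 0, and Lᵢ increasing only on {s : ξᵢ(s) = 0} (i.e., Lᵢ is constant on any interval where ξᵢ > 0), then ξ₁ = ξ₂ and L₁ = L₂. -/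
lemma skorohod_le_aux
    (f L₁ L₂ ξ₁ ξ₂ : ℝ → ℝ)
    (hξ₁ : ∀ t, ξ₁ t = f t + L₁ t) (hξ₂ : ∀ t, ξ₂ t = f t + L₂ t)
    (hL₁c : ContinuousOn L₁ (Set.Ici 0)) (hL₂c : ContinuousOn L₂ (Set.Ici 0))
    (hL₂m : MonotoneOn L₂ (Set.Ici 0))
    (hL₁0 : L₁ 0 = 0) (hL₂0 : L₂ 0 = 0)
    (hξ₂pos : ∀ t ∈ Set.Ici (0:ℝ), 0 ≤ ξ₂ t)
    (hflat₁ : ∀ a b : ℝ, 0 ≤ a → a ≤ b → (∀ s ∈ Set.Icc a b, 0 < ξ₁ s) → L₁ a = L₁ b) :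
    ∀ t ∈ Set.Ici (0:ℝ), L₁ t ≤ L₂ t := by
  intro t ht
  by_contra hcon
  push_neg at hcon
  -- S : set of points in [0,t] where L₁ ≤ L₂
  set S : Set ℝ := Set.Icc 0 t ∩ (fun u => L₂ u - L₁ u) ⁻¹' Set.Ici 0 with hS
  have ht0 : (0:ℝ) ≤ t := ht
  have h0S : (0:ℝ) ∈ S := by
    constructor
    · exact ⟨le_refl 0, ht0⟩
    · simp [Set.mem_preimage, hL₁0, hL₂0]
  have hSne : S.Nonempty := ⟨0, h0S⟩
  have hScl : IsClosed S := by
    have hg : ContinuousOn (fun u => L₂ u - L₁ u) (Set.Icc 0 t) :=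
      (hL₂c.mono (Set.Icc_subset_Ici_self)).sub (hL₁c.mono (Set.Icc_subset_Ici_self))
    exact hg.preimage_isClosed_of_isClosed isClosed_Icc isClosed_Ici
  have hScomp : IsCompact S := (isCompact_Icc).of_isClosed_subset hScl Set.inter_subset_left
  obtain ⟨hs_mem⟩ : ∃ _ : sSup S ∈ S, True := ⟨hScomp.sSup_mem hSne, trivial⟩
  set s := sSup S with hsdef
  have hs0 : 0 ≤ s := hs_mem.1.1
  have hst : s ≤ t := hs_mem.1.2
  have hsle : L₁ s ≤ L₂ s := by
    have := hs_mem.2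
    simpa [Set.mem_preimage, sub_nonneg] using this
  have hsne : s ≠ t := fun h => absurd (h ▸ hsle) (not_le.mpr hcon)
  have hslt : s < t := lt_of_le_of_ne hst hsne
  -- on (s, t], L₂ < L₁
  have hgt : ∀ u ∈ Set.Ioc s t, L₂ u < L₁ u := by
    intro u hu
    by_contra hle
    push_neg at hle
    have huS : u ∈ S := by
      refine ⟨⟨le_of_lt (lt_of_le_of_lt hs0 hu.1), hu.2⟩, ?_⟩
      simp [Set.mem_preimage, sub_nonneg, hle]
    exact absurd (le_csSup hScomp.bddAbove huS) (not_le.mpr hu.1)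
  -- so ξ₁ > 0 on (s,t]
  have hxi : ∀ u ∈ Set.Ioc s t, 0 < ξ₁ u := by
    intro u hu
    have hu0 : (0:ℝ) ≤ u := le_of_lt (lt_of_le_of_lt hs0 hu.1)
    have h2 : 0 ≤ ξ₂ u := hξ₂pos u hu0
    have : ξ₂ u < ξ₁ u := by
      rw [hξ₁, hξ₂]
      linarith [hgt u hu]
    linarith
  -- L₁ is constant equal to L₁ t on (s,t]
  have hconst : ∀ u ∈ Set.Ioc s t, L₁ u = L₁ t := by
    intro u hu
    refine hflat₁ u t (le_of_lt (lt_of_le_of_lt hs0 hu.1)) hu.2 ?_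
    intro v hv
    exact hxi v ⟨lt_of_lt_of_le hu.1 hv.1, hv.2⟩
  -- by continuity, L₁ s = L₁ t
  have hL1st : L₁ s = L₁ t := by
    have hne : (nhdsWithin s (Set.Ioc s t)).NeBot := by
      rw [← mem_closure_iff_nhdsWithin_neBot, closure_Ioc (ne_of_lt hslt)]
      exact ⟨le_refl s, hst⟩
    have h1 : Filter.Tendsto L₁ (nhdsWithin s (Set.Ioc s t)) (nhds (L₁ s)) := by
      have := (hL₁c s hs0).tendsto
      exact this.mono_left (nhdsWithin_mono s (fun u hu => le_of_lt (lt_of_le_of_lt hs0 hu.1)))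
    have h2 : Filter.Tendsto L₁ (nhdsWithin s (Set.Ioc s t)) (nhds (L₁ t)) := by
      apply Filter.Tendsto.congr' _ tendsto_const_nhds
      filter_upwards [self_mem_nhdsWithin] with u hu
      exact (hconst u hu).symm
    exact tendsto_nhds_unique h1 h2
  have : L₁ t ≤ L₂ t := by
    calc L₁ t = L₁ s := hL1st.symm
    _ ≤ L₂ s := hsle
    _ ≤ L₂ t := hL₂m hs0 ht hst
  exact absurd this (not_le.mpr hcon)


/-- Uniqueness for the Skorohod problem on `[0,∞)`: if `(ξ₁, L₁)` and
`(ξ₂, L₂)` both solve it for the same continuous driving path `f` with `f 0 ≥ 0`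
(each `Lᵢ` continuous, nondecreasing, `Lᵢ 0 = 0`, `ξᵢ = f + Lᵢ ≥ 0`, and `Lᵢ` constant
on any interval where `ξᵢ > 0`), then `ξ₁ = ξ₂` and `L₁ = L₂` on `[0,∞)`. -/
theorem skorohod_solution_unique
    (f L₁ L₂ ξ₁ ξ₂ : ℝ → ℝ)
    (hf : ContinuousOn f (Set.Ici 0)) (hf0 : 0 ≤ f 0)
    (hξ₁ : ∀ t, ξ₁ t = f t + L₁ t) (hξ₂ : ∀ t, ξ₂ t = f t + L₂ t)
    (hL₁c : ContinuousOn L₁ (Set.Ici 0)) (hL₂c : ContinuousOn L₂ (Set.Ici 0))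
    (hL₁m : MonotoneOn L₁ (Set.Ici 0)) (hL₂m : MonotoneOn L₂ (Set.Ici 0))
    (hL₁0 : L₁ 0 = 0) (hL₂0 : L₂ 0 = 0)
    (hξ₁pos : ∀ t ∈ Set.Ici (0:ℝ), 0 ≤ ξ₁ t)
    (hξ₂pos : ∀ t ∈ Set.Ici (0:ℝ), 0 ≤ ξ₂ t)
    (hflat₁ : ∀ a b : ℝ, 0 ≤ a → a ≤ b → (∀ s ∈ Set.Icc a b, 0 < ξ₁ s) → L₁ a = L₁ b)
    (hflat₂ : ∀ a b : ℝ, 0 ≤ a → a ≤ b → (∀ s ∈ Set.Icc a b, 0 < ξ₂ s) → L₂ a = L₂ b) :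
    ∀ t ∈ Set.Ici (0:ℝ), ξ₁ t = ξ₂ t ∧ L₁ t = L₂ t := by
  intro t ht
  have h12 := skorohod_le_aux f L₁ L₂ ξ₁ ξ₂ hξ₁ hξ₂ hL₁c hL₂c hL₂m hL₁0 hL₂0 hξ₂pos hflat₁ t ht
  have h21 := skorohod_le_aux f L₂ L₁ ξ₂ ξ₁ hξ₂ hξ₁ hL₂c hL₁c hL₁m hL₂0 hL₁0 hξ₁pos hflat₂ t ht
  have hL : L₁ t = L₂ t := le_antisymm h12 h21
  exact ⟨by rw [hξ₁, hξ₂, hL], hL⟩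
end

section
/- Let B be a standard one-dimensional Brownian motion started at 0. Then the reflected process |B_t| has the same law (as a process at each fixed time t, in distribution) as the Skorohod reflection of B on [0,∞): for each t, |B_t| and B_t + sup_{s≤t}(-B_s)⁺ have the same distribution. -/
/-!
Since `B 0 = 0`, the Skorohod reflection `B t + sup_{s ≤ t} (-B s)⁺` equals
`sup_{s ≤ t} (B t - B s)`, the running maximum of the time-reversed path `s ↦ B t - B (t - s)`.
On the grid `j / n * t`, reversing the order of the independent Gaussian increments turns it into
the maximum of a random walk `S` with symmetric steps. Reflecting the walk after the first time
it reaches `c` preserves its law, which gives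
`P(S_n ≥ c) + P(S_n > c) ≥ P(max_j S_j ≥ c) ≥ 2 P(S_n > c + 2ε) - P(some step exceeds ε)`
for `c > 0`.
Here `S_n = B t` is Gaussian, and by path continuity the grid maxima converge to the supremum
while the probability of a step larger than `ε` tends to `0`; letting `ε → 0` yields
`P(sup_{s ≤ t} (B t - B s) > b) = 2 P(B t > b) = P(|B t| > b)` for `b ≥ 0`.
-/

open MeasureTheory ProbabilityTheory

/-- A standard one-dimensional Brownian motion started at `0`: continuous paths,
`B 0 = 0`, measurable marginals, Gaussian increments with the right variance, and
independent increments. -/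
def IsBrownianMotion1d {Ω : Type*} [MeasureSpace Ω] (B : ℝ → Ω → ℝ) : Prop :=
  (∀ ω, Continuous fun t => B t ω) ∧
  (∀ ω, B 0 ω = 0) ∧
  (∀ t, Measurable (B t)) ∧
  (∀ s t : ℝ, 0 ≤ s → s ≤ t →
    Measure.map (fun ω => B t ω - B s ω) ℙ = gaussianReal 0 (t - s).toNNReal) ∧
  (∀ n : ℕ, ∀ t : ℕ → ℝ, Monotone t → 0 ≤ t 0 →
    iIndepFun
      (fun i : Fin n => fun ω => B (t (i + 1)) ω - B (t i) ω) ℙ)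


open Filter Set Topology

lemma measurableSet_exists_le_lt {α : Type*} [MeasurableSpace α] {f : ℕ → α → ℝ}
    (hf : ∀ j, Measurable (f j)) (c : ℝ) (n : ℕ) : MeasurableSet {x | ∃ j ≤ n, c < f j x} := by
  measurability

lemma measurableSet_exists_lt_abs {ι : Type*} [Countable ι] (ε : ℝ) :
    MeasurableSet {x : ι → ℝ | ∃ i, ε < |x i|} := by
  measurability

lemma MeasureTheory.Measure.ext_of_Ioi {μ ν : Measure ℝ} [IsProbabilityMeasure μ]
    [IsProbabilityMeasure ν] (h : ∀ a, μ (Ioi a) = ν (Ioi a)) : μ = ν :=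
  Measure.ext_of_Iic μ ν fun a => by
    rw [← compl_Ioi, prob_compl_eq_one_sub measurableSet_Ioi,
      prob_compl_eq_one_sub measurableSet_Ioi, h]

lemma measure_Ioi_le_of_forall_lt {ν : Measure ℝ} {b : ℝ} {x : ENNReal}
    (h : ∀ c, b < c → ν (Ioi c) ≤ x) : ν (Ioi b) ≤ x := by
  have hunion : Ioi b = ⋃ k : ℕ, Ioi (b + 1 / (k + 1)) := by
    ext y
    simp only [mem_Ioi, mem_iUnion]
    refine ⟨fun hy => ?_, fun ⟨k, hk⟩ => lt_trans (by simp; positivity) hk⟩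
    obtain ⟨k, hk⟩ := exists_nat_one_div_lt (sub_pos.2 hy)
    exact ⟨k, by linarith⟩
  have hmono : Monotone fun k : ℕ => Ioi (b + 1 / ((k : ℝ) + 1)) := fun k l hkl =>
    Ioi_subset_Ioi (by gcongr)
  rw [hunion, hmono.measure_iUnion]
  exact iSup_le fun k => h _ (by simp; positivity)

lemma measure_lt_abs_eq {ν : Measure ℝ} (hν : ν.map Neg.neg = ν) {b : ℝ} (hb : 0 ≤ b) :
    ν {x | b < |x|} = 2 * ν (Ioi b) := by
  have hsplit : {x : ℝ | b < |x|} = Ioi b ∪ Neg.neg ⁻¹' Ioi b := by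
    ext x
    simp [lt_abs, lt_neg]
  have hneg : ν (Neg.neg ⁻¹' Ioi b) = ν (Ioi b) := by
    rw [← Measure.map_apply measurable_neg measurableSet_Ioi, hν]
  rw [hsplit, measure_union _ (measurable_neg measurableSet_Ioi), hneg, two_mul]
  exact Set.disjoint_left.2 fun x (hx : b < x) (hx' : b < -x) => by linarith

lemma map_neg_gaussianReal_zero (v : NNReal) :
    (gaussianReal 0 v).map Neg.neg = gaussianReal 0 v := by
  simpa using gaussianReal_map_neg (μ := 0) (v := v)

namespace RandomWalk

variable {N : ℕ}

def partialSum (j : ℕ) (x : Fin N → ℝ) : ℝ :=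
  ∑ i : Fin N, if (i : ℕ) < j then x i else 0

lemma partialSum_zero (x : Fin N → ℝ) : partialSum 0 x = 0 := by
  simp [partialSum]

lemma partialSum_succ {j : ℕ} (hj : j < N) (x : Fin N → ℝ) :
    partialSum (j + 1) x = partialSum j x + x ⟨j, hj⟩ := by
  rw [← sub_eq_iff_eq_add', partialSum, partialSum, ← Finset.sum_sub_distrib]
  calc _ = ∑ i : Fin N, if i = ⟨j, hj⟩ then x i else 0 :=
        Finset.sum_congr rfl fun i _ => by
          simp only [Fin.ext_iff]
          split_ifs <;> first | omega | ring
    _ = x ⟨j, hj⟩ := by simp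

lemma measurable_partialSum (j : ℕ) : Measurable (partialSum (N := N) j) :=
  Finset.measurable_sum _ fun i _ => by
    split_ifs
    exacts [measurable_pi_apply i, measurable_const]

lemma partialSum_sub (g : ℕ → ℝ) {j : ℕ} (hj : j ≤ N) :
    partialSum j (fun i : Fin N => g (i + 1) - g i) = g j - g 0 := by
  rw [partialSum, Fin.sum_univ_eq_sum_range (fun i => if i < j then g (i + 1) - g i else 0),
    ← Finset.sum_range_sub, Finset.sum_ite, Finset.sum_const_zero, add_zero]
  congr 1
  ext i
  simp only [Finset.mem_filter, Finset.mem_range]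
  omega

lemma partialSum_rev (j : ℕ) (x : Fin N → ℝ) :
    partialSum (N - j) (fun i => x i.rev) = partialSum N x - partialSum j x := by
  simp only [partialSum, ← Finset.sum_sub_distrib]
  rw [← Equiv.sum_comp Fin.revPerm]
  refine Finset.sum_congr rfl fun i _ => ?_
  simp only [Fin.revPerm_apply, Fin.rev_rev, Fin.val_rev, i.isLt, if_true]
  have := i.isLt
  split_ifs <;> first | omega | ring

def reflectFrom (j : ℕ) (x : Fin N → ℝ) : Fin N → ℝ :=
  fun i : Fin N => if (i : ℕ) < j then x i else -x i

lemma partialSum_reflectFrom_of_le {j k : ℕ} (hkj : k ≤ j) (x : Fin N → ℝ) :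
    partialSum k (reflectFrom j x) = partialSum k x :=
  Finset.sum_congr rfl fun i _ => by
    by_cases hik : (i : ℕ) < k
    · simp [reflectFrom, hik, hik.trans_le hkj]
    · simp [hik]

lemma partialSum_reflectFrom (j : ℕ) (x : Fin N → ℝ) :
    partialSum N (reflectFrom j x) = 2 * partialSum j x - partialSum N x := by
  simp only [partialSum, Finset.mul_sum, ← Finset.sum_sub_distrib]
  refine Finset.sum_congr rfl fun i _ => ?_
  simp only [reflectFrom, i.isLt, if_true]
  split_ifs <;> ring

def firstHit (c : ℝ) (j : ℕ) : Set (Fin N → ℝ) :=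
  {x | c ≤ partialSum j x ∧ ∀ k < j, partialSum k x < c}

lemma measurableSet_firstHit (c : ℝ) (j : ℕ) : MeasurableSet (firstHit (N := N) c j) := by
  simp only [firstHit, ofPred_and, ofPred_forall]
  exact (measurableSet_le measurable_const (measurable_partialSum j)).inter <|
    .iInter fun k => .iInter fun _ => measurableSet_lt (measurable_partialSum k) measurable_const

lemma pairwise_disjoint_firstHit (c : ℝ) :
    Pairwise (Function.onFun Disjoint (firstHit (N := N) c)) := by
  have key : ∀ {j k : ℕ}, j < k → Disjoint (firstHit (N := N) c j) (firstHit c k) :=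
    fun hjk => Set.disjoint_left.2 fun x hj hk => (hk.2 _ hjk).not_ge hj.1
  intro j k hjk
  rcases lt_or_gt_of_ne hjk with h | h
  exacts [key h, (key h).symm]

lemma biUnion_firstHit (c : ℝ) :
    ⋃ j ∈ Finset.range (N + 1), firstHit c j
      = {x : Fin N → ℝ | ∃ j ≤ N, c ≤ partialSum j x} := by
  ext x
  simp only [mem_iUnion, Finset.mem_range, Nat.lt_succ_iff, exists_prop, mem_ofPred_eq]
  constructor
  · rintro ⟨j, hj, hx, -⟩
    exact ⟨j, hj, hx⟩
  · rintro ⟨j, hj, hx⟩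
    have hex : ∃ j, c ≤ partialSum j x := ⟨j, hx⟩
    exact ⟨Nat.find hex, (Nat.find_min' hex hx).trans hj, Nat.find_spec hex,
      fun k hk => not_le.1 (Nat.find_min hex hk)⟩

lemma measure_inter_eq_sum_firstHit (μ : Measure (Fin N → ℝ)) (c : ℝ) {A : Set (Fin N → ℝ)}
    (hA : MeasurableSet A) :
    μ ({x | ∃ j ≤ N, c ≤ partialSum j x} ∩ A)
      = ∑ j ∈ Finset.range (N + 1), μ (firstHit c j ∩ A) := by
  rw [← biUnion_firstHit, iUnion₂_inter, measure_biUnion_finset]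
  · exact fun j _ k _ hjk =>
      (pairwise_disjoint_firstHit c hjk).mono inter_subset_left inter_subset_left
  · exact fun j _ => (measurableSet_firstHit c j).inter hA

lemma partialSum_lt_of_mem_firstHit {c ε : ℝ} (hc : 0 < c) {j : ℕ} (hj : j ≤ N)
    {x : Fin N → ℝ} (hx : x ∈ firstHit c j) (hε : ∀ i, x i ≤ ε) : partialSum j x < c + ε := by
  obtain _ | k := j
  · exact absurd hx.1 (by rw [partialSum_zero]; exact not_le.2 hc)
  · rw [partialSum_succ hj]
    linarith [hx.2 k k.lt_succ_self, hε ⟨k, hj⟩]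

variable {ν : Measure ℝ} [SigmaFinite ν]

lemma measurePreserving_reflectFrom (hν : ν.map Neg.neg = ν) (j : ℕ) :
    MeasurePreserving (reflectFrom j) (Measure.pi fun _ : Fin N => ν)
      (Measure.pi fun _ : Fin N => ν) :=
  measurePreserving_pi (fun _ => ν) (fun _ => ν)
    (f := fun (i : Fin N) y => if (i : ℕ) < j then y else -y) fun i => by
      split_ifs
      exacts [.id ν, ⟨measurable_neg, hν⟩]

lemma measurePreserving_comp_rev :
    MeasurePreserving (fun (x : Fin N → ℝ) i => x i.rev) (Measure.pi fun _ : Fin N => ν)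
      (Measure.pi fun _ : Fin N => ν) := by
  convert measurePreserving_arrowCongr' (fun _ : Fin N => ν) (fun _ : Fin N => ν)
    Fin.revPerm (MeasurableEquiv.refl ℝ) (fun _ => .id ν) using 1
  ext x i
  simp [MeasurableEquiv.arrowCongr', Equiv.arrowCongr', Equiv.arrowCongr]

lemma measure_exists_lt_partialSum_sub (c : ℝ) :
    (Measure.pi fun _ : Fin N => ν) {x | ∃ j ≤ N, c < partialSum N x - partialSum j x}
      = (Measure.pi fun _ : Fin N => ν) {x | ∃ j ≤ N, c < partialSum j x} := by
  have hpre : {x : Fin N → ℝ | ∃ j ≤ N, c < partialSum N x - partialSum j x}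
      = (fun x i => x i.rev) ⁻¹' {x | ∃ j ≤ N, c < partialSum j x} := by
    ext x
    simp only [mem_preimage, mem_ofPred_eq]
    constructor
    · rintro ⟨j, -, h⟩
      exact ⟨N - j, N.sub_le j, by rwa [partialSum_rev]⟩
    · rintro ⟨j, hj, h⟩
      refine ⟨N - j, N.sub_le j, ?_⟩
      rwa [← partialSum_rev, Nat.sub_sub_self hj]
  rw [hpre, measurePreserving_comp_rev.measure_preimage]
  exact (measurableSet_exists_le_lt measurable_partialSum c N).nullMeasurableSet

/-- On `firstHit c j`, reflecting the steps after `j` preserves the law and changes the endpoint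
`S_N` into `2 S_j - S_N`. -/
lemma measure_firstHit_inter_reflect (hν : ν.map Neg.neg = ν) (c : ℝ) (j : ℕ) :
    (Measure.pi fun _ : Fin N => ν)
        (firstHit c j ∩ {x | 2 * partialSum j x - partialSum N x < c})
      = (Measure.pi fun _ : Fin N => ν) (firstHit c j ∩ {x | partialSum N x < c}) := by
  have hpre : reflectFrom j ⁻¹' (firstHit c j ∩ {x : Fin N → ℝ | partialSum N x < c})
      = firstHit c j ∩ {x | 2 * partialSum j x - partialSum N x < c} := by
    ext x
    simp +contextual [firstHit, partialSum_reflectFrom, partialSum_reflectFrom_of_le, le_of_lt]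
  rw [← hpre, (measurePreserving_reflectFrom hν j).measure_preimage]
  exact ((measurableSet_firstHit c j).inter
    (measurableSet_lt (measurable_partialSum N) measurable_const)).nullMeasurableSet

theorem measure_exists_le_partialSum (hν : ν.map Neg.neg = ν) (c : ℝ) :
    (Measure.pi fun _ : Fin N => ν) {x | ∃ j ≤ N, c ≤ partialSum j x}
      = (Measure.pi fun _ : Fin N => ν) {x | c ≤ partialSum N x}
        + ∑ j ∈ Finset.range (N + 1), (Measure.pi fun _ : Fin N => ν)
            (firstHit c j ∩ {x | 2 * partialSum j x - partialSum N x < c}) := by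
  set μ := Measure.pi fun _ : Fin N => ν
  have hle : MeasurableSet {x : Fin N → ℝ | c ≤ partialSum N x} :=
    measurableSet_le measurable_const (measurable_partialSum N)
  have hreach : {x | ∃ j ≤ N, c ≤ partialSum j x} ∩ {x | c ≤ partialSum N x}
      = {x : Fin N → ℝ | c ≤ partialSum N x} :=
    inter_eq_right.2 fun x hx => ⟨N, le_rfl, hx⟩
  have hdiff : {x | ∃ j ≤ N, c ≤ partialSum j x} \ {x | c ≤ partialSum N x}
      = {x | ∃ j ≤ N, c ≤ partialSum j x} ∩ {x : Fin N → ℝ | partialSum N x < c} := by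
    ext x
    simp
  rw [← measure_inter_add_sdiff _ hle, hreach, hdiff, measure_inter_eq_sum_firstHit μ c
    (measurableSet_lt (measurable_partialSum N) measurable_const)]
  exact congrArg _ <| Finset.sum_congr rfl fun j _ => (measure_firstHit_inter_reflect hν c j).symm

theorem measure_exists_le_partialSum_le (hν : ν.map Neg.neg = ν) (c : ℝ) :
    (Measure.pi fun _ : Fin N => ν) {x | ∃ j ≤ N, c ≤ partialSum j x}
      ≤ (Measure.pi fun _ : Fin N => ν) {x | c ≤ partialSum N x}
        + (Measure.pi fun _ : Fin N => ν) {x | c < partialSum N x} := by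
  set μ := Measure.pi fun _ : Fin N => ν
  rw [measure_exists_le_partialSum hν]
  gcongr
  calc ∑ j ∈ Finset.range (N + 1),
        μ (firstHit c j ∩ {x | 2 * partialSum j x - partialSum N x < c})
      ≤ ∑ j ∈ Finset.range (N + 1), μ (firstHit c j ∩ {x | c < partialSum N x}) :=
        Finset.sum_le_sum fun j _ => measure_mono fun x ⟨hhit, hx⟩ =>
          ⟨hhit, by simp only [mem_ofPred_eq] at hx ⊢; linarith [hhit.1]⟩
    _ = μ ({x | ∃ j ≤ N, c ≤ partialSum j x} ∩ {x | c < partialSum N x}) :=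
        (measure_inter_eq_sum_firstHit μ c
          (measurableSet_lt measurable_const (measurable_partialSum N))).symm
    _ ≤ μ {x | c < partialSum N x} := measure_mono inter_subset_right

theorem two_mul_measure_lt_partialSum_le (hν : ν.map Neg.neg = ν) {c ε : ℝ} (hc : 0 < c)
    (hε : 0 ≤ ε) :
    2 * (Measure.pi fun _ : Fin N => ν) {x | c + 2 * ε < partialSum N x}
      ≤ (Measure.pi fun _ : Fin N => ν) {x | ∃ j ≤ N, c ≤ partialSum j x}
        + (Measure.pi fun _ : Fin N => ν) {x | ∃ i, ε < |x i|} := by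
  set μ := Measure.pi fun _ : Fin N => ν
  set G := {x : Fin N → ℝ | (∀ i, |x i| ≤ ε) ∧ c + 2 * ε < partialSum N x}
  have hG : μ G ≤ ∑ j ∈ Finset.range (N + 1),
      μ (firstHit c j ∩ {x | 2 * partialSum j x - partialSum N x < c}) := by
    have hsub : G ⊆ ⋃ j ∈ Finset.range (N + 1), firstHit c j ∩ G := by
      rw [← iUnion₂_inter, biUnion_firstHit]
      exact fun x hx => ⟨⟨N, le_rfl, by linarith [hx.2]⟩, hx⟩
    refine (measure_mono hsub).trans <| (measure_biUnion_finset_le _ _).trans <|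
      Finset.sum_le_sum fun j hj => measure_mono fun x ⟨hhit, hsmall, hx⟩ => ⟨hhit, ?_⟩
    have := partialSum_lt_of_mem_firstHit hc (Nat.lt_succ_iff.1 (Finset.mem_range.1 hj)) hhit
      fun i => (le_abs_self _).trans (hsmall i)
    simp only [mem_ofPred_eq]
    linarith
  have hsplit : μ {x | c + 2 * ε < partialSum N x} ≤ μ G + μ {x | ∃ i, ε < |x i|} := by
    refine (measure_mono fun x hx => ?_).trans (measure_union_le _ _)
    by_cases hsmall : ∀ i, |x i| ≤ ε
    · exact Or.inl ⟨hsmall, hx⟩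
    · push Not at hsmall
      exact Or.inr hsmall
  have hmono : {x : Fin N → ℝ | c + 2 * ε < partialSum N x} ⊆ {x | c ≤ partialSum N x} :=
    fun x hx => by simp only [mem_ofPred_eq] at hx ⊢; linarith
  calc 2 * μ {x | c + 2 * ε < partialSum N x}
      = μ {x | c + 2 * ε < partialSum N x} + μ {x | c + 2 * ε < partialSum N x} := two_mul _
    _ ≤ μ {x | c ≤ partialSum N x} + (μ G + μ {x | ∃ i, ε < |x i|}) :=
        add_le_add (measure_mono hmono) hsplit
    _ ≤ _ := by
        rw [measure_exists_le_partialSum hν, ← add_assoc]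
        gcongr

end RandomWalk

lemma lt_add_sSup_max_neg_iff {f : ℝ → ℝ} {t : ℝ} (hf : ContinuousOn f (Icc 0 t))
    (hf0 : f 0 = 0) (ht : 0 ≤ t) (b : ℝ) :
    b < f t + sSup ((fun s => max (-f s) 0) '' Icc 0 t) ↔ ∃ s ∈ Icc 0 t, b < f t - f s := by
  have hbdd : BddAbove ((fun s => max (-f s) 0) '' Icc 0 t) :=
    isCompact_Icc.bddAbove_image (by fun_prop)
  rw [← sub_lt_iff_lt_add', lt_csSup_iff hbdd ((nonempty_Icc.2 ht).image _), exists_mem_image]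
  constructor
  · rintro ⟨s, hs, h⟩
    rcases lt_max_iff.1 h with h | h
    · exact ⟨s, hs, by linarith⟩
    · exact ⟨0, left_mem_Icc.2 ht, by linarith⟩
  · rintro ⟨s, hs, h⟩
    exact ⟨s, hs, lt_max_of_lt_left (by linarith)⟩

lemma gridPoint_mem_Icc {t : ℝ} (ht : 0 ≤ t) {j n : ℕ} (hj : j ≤ n) :
    (j : ℝ) / n * t ∈ Icc 0 t :=
  ⟨by positivity,
    mul_le_of_le_one_left ht (div_le_one_of_le₀ (by exact_mod_cast hj) n.cast_nonneg)⟩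

lemma tendsto_floor_gridPoint {s t : ℝ} (hs : 0 ≤ s) (ht : 0 < t) :
    Tendsto (fun n : ℕ => (⌊s / t * n⌋₊ : ℝ) / n * t) atTop (𝓝 s) := by
  have := ((tendsto_nat_floor_mul_div_atTop (div_nonneg hs ht.le)).comp
    tendsto_natCast_atTop_atTop).mul_const t
  rwa [div_mul_cancel₀ s ht.ne'] at this

lemma eventually_exists_gridPoint_iff {f : ℝ → ℝ} (hf : Continuous f) {t : ℝ} (ht : 0 < t)
    (b : ℝ) : ∀ᶠ n : ℕ in atTop,
      (∃ j ≤ n, b < f t - f ((j : ℝ) / n * t)) ↔ ∃ s ∈ Icc 0 t, b < f t - f s := by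
  by_cases hE : ∃ s ∈ Icc 0 t, b < f t - f s
  · obtain ⟨s, hs, hbs⟩ := hE
    have hopen : IsOpen {u | b < f t - f u} :=
      isOpen_lt continuous_const (continuous_const.sub hf)
    filter_upwards [(tendsto_floor_gridPoint hs.1 ht).eventually (hopen.mem_nhds hbs)] with n hn
    refine iff_of_true ⟨_, Nat.floor_le_of_le ?_, hn⟩ ⟨s, hs, hbs⟩
    exact mul_le_of_le_one_left n.cast_nonneg ((div_le_one ht).2 hs.2)
  · exact Eventually.of_forall fun n =>
      iff_of_false (fun ⟨j, hj, h⟩ => hE ⟨_, gridPoint_mem_Icc ht.le hj, h⟩) hE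

lemma eventually_forall_abs_sub_gridPoint_le {f : ℝ → ℝ} {t : ℝ}
    (hf : ContinuousOn f (Icc 0 t)) (ht : 0 ≤ t) {ε : ℝ} (hε : 0 < ε) : ∀ᶠ n : ℕ in atTop,
      ∀ j < n, |f ((j + 1 : ℕ) / n * t) - f ((j : ℝ) / n * t)| ≤ ε := by
  obtain ⟨δ, hδ, hf⟩ := Metric.uniformContinuousOn_iff.1
    (isCompact_Icc.uniformContinuousOn_of_continuous hf) ε hε
  filter_upwards [(tendsto_const_div_atTop_nhds_zero_nat t).eventually (gt_mem_nhds hδ)]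
    with n hn j hj
  refine (hf _ (gridPoint_mem_Icc ht hj) _ (gridPoint_mem_Icc ht hj.le) ?_).le
  have hstep : ((j + 1 : ℕ) : ℝ) / n * t - (j : ℝ) / n * t = t / n := by
    push_cast
    ring
  rwa [Real.dist_eq, hstep, abs_of_nonneg (by positivity)]

open RandomWalk

noncomputable def gridIncrements {Ω : Type*} (B : ℝ → Ω → ℝ) (t : ℝ) (n : ℕ) (ω : Ω) :
    Fin n → ℝ :=
  fun i => B ((i + 1 : ℕ) / n * t) ω - B ((i : ℕ) / n * t) ω

lemma partialSum_gridIncrements {Ω : Type*} {B : ℝ → Ω → ℝ} {t : ℝ} {ω : Ω} (h0 : B 0 ω = 0)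
    {j n : ℕ} (hj : j ≤ n) : partialSum j (gridIncrements B t n ω) = B (j / n * t) ω := by
  unfold gridIncrements
  rw [partialSum_sub (fun k : ℕ => B (k / n * t) ω) hj]
  simp [h0]

section Brownian

variable {Ω : Type*} [MeasureSpace Ω] {B : ℝ → Ω → ℝ} {t : ℝ}

lemma measurable_gridIncrements (hmeas : ∀ s, Measurable (B s)) (n : ℕ) :
    Measurable (gridIncrements B t n) :=
  measurable_pi_lambda _ fun _ => (hmeas _).sub (hmeas _)

lemma measurableSet_exists_lt_sub (hcont : ∀ ω, Continuous fun s => B s ω)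
    (hmeas : ∀ s, Measurable (B s)) (ht : 0 < t) (b : ℝ) :
    MeasurableSet {ω | ∃ s ∈ Icc 0 t, b < B t ω - B s ω} :=
  measurableSet_of_tendsto_indicator atTop
    (fun n : ℕ => measurableSet_exists_le_lt (f := fun j ω => B t ω - B (j / n * t) ω)
      (fun _ => (hmeas t).sub (hmeas _)) b n)
    fun ω => eventually_exists_gridPoint_iff (hcont ω) ht b

lemma IsBrownianMotion1d.map_eq_gaussianReal (hB : IsBrownianMotion1d B) (ht : 0 ≤ t) :
    Measure.map (B t) ℙ = gaussianReal 0 t.toNNReal := by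
  have ⟨_, h0, _, hlaw, _⟩ := hB
  simpa [h0] using hlaw 0 t le_rfl ht

variable [IsProbabilityMeasure (ℙ : Measure Ω)]

lemma tendsto_measure_exists_gridPoint (hcont : ∀ ω, Continuous fun s => B s ω)
    (hmeas : ∀ s, Measurable (B s)) (ht : 0 < t) (b : ℝ) :
    Tendsto (fun n : ℕ => ℙ {ω | ∃ j ≤ n, b < B t ω - B (j / n * t) ω}) atTop
      (𝓝 (ℙ {ω | ∃ s ∈ Icc 0 t, b < B t ω - B s ω})) :=
  tendsto_measure_of_tendsto_indicator_of_isFiniteMeasure _ _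
    (fun n => measurableSet_exists_le_lt (f := fun j ω => B t ω - B (j / n * t) ω)
      (fun _ => (hmeas t).sub (hmeas _)) b n)
    fun ω => eventually_exists_gridPoint_iff (hcont ω) ht b

lemma tendsto_measure_exists_abs_gridIncrements_gt (hcont : ∀ ω, Continuous fun s => B s ω)
    (hmeas : ∀ s, Measurable (B s)) (ht : 0 ≤ t) {ε : ℝ} (hε : 0 < ε) :
    Tendsto (fun n : ℕ => ℙ {ω | ∃ i, ε < |gridIncrements B t n ω i|}) atTop (𝓝 0) := by
  rw [← measure_empty (μ := (ℙ : Measure Ω))]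
  refine tendsto_measure_of_tendsto_indicator_of_isFiniteMeasure _ _
    (fun n => measurable_gridIncrements hmeas n (measurableSet_exists_lt_abs ε)) fun ω => ?_
  filter_upwards [eventually_forall_abs_sub_gridPoint_le (hcont ω).continuousOn ht hε] with n hn
  simp only [mem_empty_iff_false, iff_false, not_exists, not_lt]
  exact fun i => hn i i.isLt

lemma IsBrownianMotion1d.map_gridIncrements (hB : IsBrownianMotion1d B) (ht : 0 ≤ t) (n : ℕ) :
    Measure.map (gridIncrements B t n) ℙ
      = Measure.pi fun _ : Fin n => gaussianReal 0 (t / n).toNNReal := by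
  have ⟨_, _, hmeas, hlaw, hindep⟩ := hB
  have hmono : Monotone fun j : ℕ => (j : ℝ) / n * t := fun a b hab => by dsimp only; gcongr
  have hind : iIndepFun (fun (i : Fin n) ω => gridIncrements B t n ω i) ℙ :=
    hindep n _ hmono (by simp)
  rw [(iIndepFun_iff_map_fun_eq_pi_map
    fun _ => (measurable_gridIncrements hmeas n).eval.aemeasurable).1 hind]
  congr 1
  funext i
  refine (hlaw _ _ (by positivity) (hmono i.val.le_succ)).trans ?_
  congr 2
  push_cast
  ring

lemma IsBrownianMotion1d.map_partialSum (hB : IsBrownianMotion1d B) (ht : 0 ≤ t) {n : ℕ}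
    (hn : n ≠ 0) :
    (Measure.pi fun _ : Fin n => gaussianReal 0 (t / n).toNNReal).map (partialSum n)
      = gaussianReal 0 t.toNNReal := by
  have ⟨_, h0, hmeas, _⟩ := hB
  rw [← hB.map_gridIncrements ht, Measure.map_map (measurable_partialSum n)
    (measurable_gridIncrements hmeas n), ← hB.map_eq_gaussianReal ht]
  congr 1
  funext ω
  simp [partialSum_gridIncrements (h0 ω) le_rfl, hn]

lemma IsBrownianMotion1d.measure_exists_gridPoint_eq (hB : IsBrownianMotion1d B) (ht : 0 ≤ t)
    {n : ℕ} (hn : n ≠ 0) (b : ℝ) :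
    ℙ {ω | ∃ j ≤ n, b < B t ω - B (j / n * t) ω}
      = (Measure.pi fun _ : Fin n => gaussianReal 0 (t / n).toNNReal)
          {x | ∃ j ≤ n, b < partialSum j x} := by
  have ⟨_, h0, hmeas, _⟩ := hB
  have hpre : {ω | ∃ j ≤ n, b < B t ω - B (j / n * t) ω}
      = gridIncrements B t n ⁻¹' {x | ∃ j ≤ n, b < partialSum n x - partialSum j x} := by
    ext ω
    simp only [mem_preimage, mem_ofPred_eq]
    refine exists_congr fun j => and_congr_right fun hj => ?_
    rw [partialSum_gridIncrements (h0 ω) hj, partialSum_gridIncrements (h0 ω) le_rfl,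
      div_self (Nat.cast_ne_zero.2 hn), one_mul]
  rw [hpre, ← Measure.map_apply (measurable_gridIncrements hmeas n)
    (measurableSet_exists_le_lt (f := fun j x => partialSum n x - partialSum j x)
      (fun j => (measurable_partialSum n).sub (measurable_partialSum j)) b n),
    hB.map_gridIncrements ht, measure_exists_lt_partialSum_sub]

lemma IsBrownianMotion1d.measure_exists_gridPoint_le (hB : IsBrownianMotion1d B) (ht : 0 < t)
    {n : ℕ} (hn : n ≠ 0) (b : ℝ) :
    ℙ {ω | ∃ j ≤ n, b < B t ω - B (j / n * t) ω} ≤ 2 * gaussianReal 0 t.toNNReal (Ioi b) := by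
  set μ := Measure.pi fun _ : Fin n => gaussianReal 0 (t / n).toNNReal
  have hlaw (s : Set ℝ) (hs : MeasurableSet s) :
      μ (partialSum n ⁻¹' s) = gaussianReal 0 t.toNNReal s := by
    rw [← Measure.map_apply (measurable_partialSum n) hs, hB.map_partialSum ht.le hn]
  have : NullSingletonClass (gaussianReal 0 t.toNNReal) :=
    nullSingletonClass_gaussianReal (by simpa using ht)
  rw [hB.measure_exists_gridPoint_eq ht.le hn]
  calc μ {x | ∃ j ≤ n, b < partialSum j x} ≤ μ {x | ∃ j ≤ n, b ≤ partialSum j x} :=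
        measure_mono fun x ⟨j, hj, h⟩ => ⟨j, hj, h.le⟩
    _ ≤ μ (partialSum n ⁻¹' Ici b) + μ (partialSum n ⁻¹' Ioi b) :=
        measure_exists_le_partialSum_le (map_neg_gaussianReal_zero _) b
    _ = 2 * gaussianReal 0 t.toNNReal (Ioi b) := by
        rw [hlaw _ measurableSet_Ici, hlaw _ measurableSet_Ioi, measure_congr Ioi_ae_eq_Ici,
          two_mul]

lemma IsBrownianMotion1d.two_mul_measure_Ioi_le (hB : IsBrownianMotion1d B) (ht : 0 < t)
    {n : ℕ} (hn : n ≠ 0) {b ε : ℝ} (hb : 0 ≤ b) (hε : 0 < ε) :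
    2 * gaussianReal 0 t.toNNReal (Ioi (b + 3 * ε))
      ≤ ℙ {ω | ∃ j ≤ n, b < B t ω - B (j / n * t) ω}
        + ℙ {ω | ∃ i, ε < |gridIncrements B t n ω i|} := by
  have ⟨_, _, hmeas, _⟩ := hB
  set μ := Measure.pi fun _ : Fin n => gaussianReal 0 (t / n).toNNReal
  have hsteps : ℙ {ω | ∃ i, ε < |gridIncrements B t n ω i|} = μ {x | ∃ i, ε < |x i|} := by
    rw [show μ = Measure.map (gridIncrements B t n) ℙ from (hB.map_gridIncrements ht.le n).symm,
      Measure.map_apply (measurable_gridIncrements hmeas n) (measurableSet_exists_lt_abs ε)]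
    rfl
  have hlaw : μ (partialSum n ⁻¹' Ioi (b + ε + 2 * ε))
      = gaussianReal 0 t.toNNReal (Ioi (b + 3 * ε)) := by
    rw [← Measure.map_apply (measurable_partialSum n) measurableSet_Ioi,
      hB.map_partialSum ht.le hn]
    ring_nf
  have hsub : {x : Fin n → ℝ | ∃ j ≤ n, b + ε ≤ partialSum j x}
      ⊆ {x | ∃ j ≤ n, b < partialSum j x} :=
    fun x ⟨j, hj, h⟩ => ⟨j, hj, by linarith⟩
  rw [hB.measure_exists_gridPoint_eq ht.le hn, hsteps, ← hlaw]
  calc 2 * μ (partialSum n ⁻¹' Ioi (b + ε + 2 * ε))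
      ≤ μ {x | ∃ j ≤ n, b + ε ≤ partialSum j x} + μ {x | ∃ i, ε < |x i|} :=
        two_mul_measure_lt_partialSum_le (map_neg_gaussianReal_zero _) (by positivity) hε.le
    _ ≤ μ {x | ∃ j ≤ n, b < partialSum j x} + μ {x | ∃ i, ε < |x i|} :=
        add_le_add (measure_mono hsub) le_rfl

theorem IsBrownianMotion1d.measure_exists_lt_sub (hB : IsBrownianMotion1d B) (ht : 0 < t)
    {b : ℝ} (hb : 0 ≤ b) :
    ℙ {ω | ∃ s ∈ Icc 0 t, b < B t ω - B s ω} = 2 * gaussianReal 0 t.toNNReal (Ioi b) := by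
  have ⟨hcont, _, hmeas, _⟩ := hB
  have htend := tendsto_measure_exists_gridPoint hcont hmeas ht b
  refine le_antisymm (le_of_tendsto htend <| (eventually_ne_atTop 0).mono
    fun n hn => hB.measure_exists_gridPoint_le ht hn b) ?_
  have hlower (ε : ℝ) (hε : 0 < ε) : 2 * gaussianReal 0 t.toNNReal (Ioi (b + 3 * ε))
      ≤ ℙ {ω | ∃ s ∈ Icc 0 t, b < B t ω - B s ω} := by
    simpa using ge_of_tendsto
      (htend.add (tendsto_measure_exists_abs_gridIncrements_gt hcont hmeas ht.le hε))
      ((eventually_ne_atTop 0).mono fun n hn => hB.two_mul_measure_Ioi_le ht hn hb hε)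
  simpa using measure_Ioi_le_of_forall_lt (ν := (2 : ENNReal) • gaussianReal 0 t.toNNReal)
    fun c hc => by
      simpa [show b + 3 * ((c - b) / 3) = c by ring] using hlower ((c - b) / 3) (by linarith)

lemma IsBrownianMotion1d.measure_lt_abs_eq_measure_exists_lt_sub (hB : IsBrownianMotion1d B)
    (ht : 0 < t) (b : ℝ) :
    ℙ {ω | b < |B t ω|} = ℙ {ω | ∃ s ∈ Icc 0 t, b < B t ω - B s ω} := by
  have ⟨_, _, hmeas, _⟩ := hB
  rcases lt_or_ge b 0 with hb | hb
  · have habs_univ : {ω | b < |B t ω|} = univ :=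
      eq_univ_of_forall fun ω => hb.trans_le (abs_nonneg (B t ω))
    have hsub_univ : {ω | ∃ s ∈ Icc 0 t, b < B t ω - B s ω} = univ :=
      eq_univ_of_forall fun ω => ⟨t, right_mem_Icc.2 ht.le, by simpa using hb⟩
    rw [habs_univ, hsub_univ]
  · rw [hB.measure_exists_lt_sub ht hb, ← measure_lt_abs_eq (map_neg_gaussianReal_zero _) hb,
      ← hB.map_eq_gaussianReal ht.le,
      Measure.map_apply (hmeas t) (measurableSet_lt measurable_const measurable_abs)]
    rfl

end Brownian

/-- Lévy's theorem, fixed-time distributional version: for a standard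
Brownian motion `B` started at `0` and any `t ≥ 0`, the reflected value `|B t|` has the
same distribution as the Skorohod reflection `B t + sup_{s ≤ t} (-B s)⁺`. -/
theorem reflected_BM_eq_skorohod_reflection_in_law
    {Ω : Type*} [MeasureSpace Ω] [IsProbabilityMeasure (ℙ : Measure Ω)]
    (B : ℝ → Ω → ℝ) (hB : IsBrownianMotion1d B) (t : ℝ) (ht : 0 ≤ t) :
    Measure.map (fun ω => |B t ω|) ℙ =
      Measure.map
        (fun ω => B t ω + sSup ((fun s => max (-B s ω) 0) '' Set.Icc 0 t)) ℙ := by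
  have ⟨hcont, h0, hmeas, _⟩ := hB
  rcases ht.eq_or_lt with rfl | ht
  · simp [h0]
  set R := fun ω => B t ω + sSup ((fun s => max (-B s ω) 0) '' Icc 0 t)
  have hR (b : ℝ) : R ⁻¹' Ioi b = {ω | ∃ s ∈ Icc 0 t, b < B t ω - B s ω} :=
    ext fun ω => lt_add_sSup_max_neg_iff (hcont ω).continuousOn (h0 ω) ht.le b
  have hRmeas : Measurable R :=
    measurable_of_Ioi fun b => hR b ▸ measurableSet_exists_lt_sub hcont hmeas ht b
  have habs : Measurable fun ω => |B t ω| := (hmeas t).abs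
  have := Measure.isProbabilityMeasure_map (μ := ℙ) hRmeas.aemeasurable
  have := Measure.isProbabilityMeasure_map (μ := ℙ) habs.aemeasurable
  refine Measure.ext_of_Ioi fun b => ?_
  rw [Measure.map_apply habs measurableSet_Ioi, Measure.map_apply hRmeas measurableSet_Ioi, hR]
  exact hB.measure_lt_abs_eq_measure_exists_lt_sub ht b
end
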